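/- For 1 ≤ i ≤ k/2, let Γ_i be the subgraph of M_k(q) induced by the color-i edges. For each 1 ≤ i ≤ k/2 − 1, the map f([a,b]) = [ωa, b] is a well-defined bijection of the vertex set of M_k(q) such that for all vertices u, v, u → v is an edge of color i if and only if f(u) → f(v) is an edge of color i+1; consequently Γ_1, Γ_2, …, Γ_{k/2} are pairwise isomorphic. -/

import Mathlib

/-- `S_k = ⟨ω^k⟩`, the set of nonzero `k`-th power residues of `F`
(for `ω` a primitive element of the finite field `F`). -/
def Sk {F : Type} [Field F] (ω : F) (k : ℕ) : Set F :=
  {x | ∃ n : ℕ, x = ω ^ (k * n)}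

/-- `S_{k,0} = {0}` and `S_{k,i} = ω^(i-1) • S_k` for `i ≥ 1`. -/
def Ski {F : Type} [Field F] (ω : F) (k : ℕ) : ℕ → Set F
  | 0 => {0}
  | (i + 1) => {x | ∃ n : ℕ, x = ω ^ i * ω ^ (k * n)}

/-- The vertex set of the Mathon-type digraph `M_k(q)`: equivalence classes of
`X = (F × F) \ {(0,0)}` under `(a,b) ~ (ag,bg)` for `g ∈ S_k`. -/
def Vtx (F : Type) [Field F] (ω : F) (k : ℕ) : Type :=
  Quot (fun p q : {p : F × F // p ≠ (0, 0)} =>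
    ∃ g ∈ Sk ω k, q.1 = (p.1.1 * g, p.1.2 * g))

/-- The equivalence class `[a, b]` of a nonzero pair `(a, b)`. -/
def vmk {F : Type} [Field F] (ω : F) (k : ℕ) (p : {p : F × F // p ≠ (0, 0)}) :
    Vtx F ω k :=
  Quot.mk _ p

/-- `[a,b] → [c,d]` is an edge of color `i` in `M_k(q)` iff `bc - ad ∈ S_{k,i}`
(well-defined since `g S_{k,i} = S_{k,i}` for `g ∈ S_k`). -/
def Edge {F : Type} [Field F] (ω : F) (k : ℕ) (u v : Vtx F ω k) (i : ℕ) : Prop :=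
  ∃ p q : {p : F × F // p ≠ (0, 0)},
    u = vmk ω k p ∧ v = vmk ω k q ∧
      p.1.2 * q.1.1 - p.1.1 * q.1.2 ∈ Ski ω k i

/-! Scaling the first coordinate by `ω` multiplies `bc - ad` by `ω`, which carries
`S_{k,i} = ω^(i-1) S_k` onto `S_{k,i+1}` as soon as `i ≥ 1`; scaling by `ω⁻¹` undoes it. -/

theorem ne_zero_of_forall_eq_pow {F : Type} [Field F] [Fintype F]
    (hF : 2 < Fintype.card F) {ω : F} (hω : ∀ x : F, x ≠ 0 → ∃ n : ℕ, x = ω ^ n) : ω ≠ 0 := by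
  classical
  rintro rfl
  obtain ⟨x, -, hx⟩ := Finset.exists_mem_notMem_of_card_lt_card
    (s := ({0, 1} : Finset F)) (t := Finset.univ)
    (by rw [Finset.card_univ]; exact Finset.card_le_two.trans_lt hF)
  simp only [Finset.mem_insert, Finset.mem_singleton, not_or] at hx
  obtain ⟨n | n, rfl⟩ := hω x hx.1
  · exact hx.2 (pow_zero _)
  · exact hx.1 (zero_pow n.succ_ne_zero)

theorem mul_mem_Ski_succ_succ_iff {F : Type} [Field F] {ω : F} (hω : ω ≠ 0) (k j : ℕ) (x : F) :
    ω * x ∈ Ski ω k (j + 1 + 1) ↔ x ∈ Ski ω k (j + 1) := by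
  simp only [Ski, Set.mem_ofPred_eq, pow_succ', mul_assoc, mul_right_inj' hω]

theorem mul_fst_ne_zero {F : Type} [Field F] (c : Fˣ) (p : {p : F × F // p ≠ (0, 0)}) :
    ((c * p.1.1, p.1.2) : F × F) ≠ (0, 0) := by
  simpa [Prod.ext_iff, c.ne_zero] using p.2

namespace Vtx

variable {F : Type} [Field F] {ω : F} {k : ℕ}

def mulFst (c : Fˣ) : Vtx F ω k → Vtx F ω k :=
  Quot.lift (fun p => vmk ω k ⟨(c * p.1.1, p.1.2), mul_fst_ne_zero c p⟩) <| by
    rintro p q ⟨g, hg, hq⟩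
    exact Quot.sound ⟨g, hg, by simp only [hq, mul_assoc]⟩

@[simp]
theorem mulFst_vmk (c : Fˣ) (p : {p : F × F // p ≠ (0, 0)}) :
    mulFst c (vmk ω k p) = vmk ω k ⟨(c * p.1.1, p.1.2), mul_fst_ne_zero c p⟩ :=
  rfl

theorem mulFst_mulFst (c d : Fˣ) (u : Vtx F ω k) : mulFst c (mulFst d u) = mulFst (c * d) u := by
  induction u using Quot.ind with
  | mk p => exact congrArg (vmk ω k) (Subtype.ext (by simp [mul_assoc]))

theorem mulFst_one (u : Vtx F ω k) : mulFst 1 u = u := by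
  induction u using Quot.ind with
  | mk p => exact congrArg (vmk ω k) (Subtype.ext (by simp))

def mulFstEquiv (c : Fˣ) : Vtx F ω k ≃ Vtx F ω k where
  toFun := mulFst c
  invFun := mulFst c⁻¹
  left_inv u := by rw [mulFst_mulFst, inv_mul_cancel, mulFst_one]
  right_inv u := by rw [mulFst_mulFst, mul_inv_cancel, mulFst_one]

theorem Edge.mulFst {c : Fˣ} {i j : ℕ} (h : ∀ x ∈ Ski ω k i, (c : F) * x ∈ Ski ω k j)
    {u v : Vtx F ω k} (huv : Edge ω k u v i) : Edge ω k (mulFst c u) (mulFst c v) j := by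
  obtain ⟨p, q, rfl, rfl, hpq⟩ := huv
  refine ⟨_, _, mulFst_vmk c p, mulFst_vmk c q, ?_⟩
  convert h _ hpq using 1
  ring

theorem edge_mulFst_iff {c : Fˣ} {i j : ℕ} (h : ∀ x, (c : F) * x ∈ Ski ω k j ↔ x ∈ Ski ω k i)
    (u v : Vtx F ω k) : Edge ω k (mulFst c u) (mulFst c v) j ↔ Edge ω k u v i := by
  refine ⟨fun huv => ?_, Edge.mulFst fun x hx => (h x).2 hx⟩
  have hinv : ∀ y ∈ Ski ω k j, ↑c⁻¹ * y ∈ Ski ω k i := fun y hy =>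
    (h _).1 (by rwa [Units.mul_inv_cancel_left])
  simpa only [mulFst_mulFst, inv_mul_cancel, mulFst_one] using Edge.mulFst hinv huv

end Vtx

theorem stmt_15_general (k : ℕ) (hk2 : 2 ≤ k)
    (F : Type) [Field F] [Fintype F]
    (hq : Fintype.card F % (2 * k) = k + 1)
    (ω : F) (hω : ∀ x : F, x ≠ 0 → ∃ n : ℕ, x = ω ^ n) :
    ∀ i : ℕ, 1 ≤ i → i ≤ k / 2 - 1 →
      ∃ f : Vtx F ω k → Vtx F ω k,
        Function.Bijective f ∧
        (∀ (p : {p : F × F // p ≠ (0, 0)})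
            (h : ((ω * p.1.1, p.1.2) : F × F) ≠ (0, 0)),
          f (vmk ω k p) = vmk ω k ⟨(ω * p.1.1, p.1.2), h⟩) ∧
        (∀ u v : Vtx F ω k,
          Edge ω k u v i ↔ Edge ω k (f u) (f v) (i + 1)) := by
  intro i hi _
  obtain ⟨j, rfl⟩ : ∃ j, i = j + 1 := ⟨i - 1, by omega⟩
  have hω0 : ω ≠ 0 := by
    refine ne_zero_of_forall_eq_pow ?_ hω
    have := Nat.mod_le (Fintype.card F) (2 * k)
    omega
  refine ⟨Vtx.mulFstEquiv (Units.mk0 ω hω0), Equiv.bijective _, fun p h => rfl, fun u v => ?_⟩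
  exact (Vtx.edge_mulFst_iff (mul_mem_Ski_succ_succ_iff hω0 k j) u v).symm

/-- For each `1 ≤ i ≤ k/2 - 1`, the map `[a,b] ↦ [ωa, b]` is a well-defined
bijection of the vertex set of `M_k(q)` carrying color-`i` edges to
color-`(i+1)` edges; consequently `Γ_1, …, Γ_{k/2}` are pairwise isomorphic. -/
theorem stmt_15 (k : ℕ) (hk2 : 2 ≤ k) (hke : Even k)
    (F : Type) [Field F] [Fintype F]
    (hq : Fintype.card F % (2 * k) = k + 1)
    (ω : F) (hω : ∀ x : F, x ≠ 0 → ∃ n : ℕ, x = ω ^ n) :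
    ∀ i : ℕ, 1 ≤ i → i ≤ k / 2 - 1 →
      ∃ f : Vtx F ω k → Vtx F ω k,
        Function.Bijective f ∧
        (∀ (p : {p : F × F // p ≠ (0, 0)})
            (h : ((ω * p.1.1, p.1.2) : F × F) ≠ (0, 0)),
          f (vmk ω k p) = vmk ω k ⟨(ω * p.1.1, p.1.2), h⟩) ∧
        (∀ u v : Vtx F ω k,
          Edge ω k u v i ↔ Edge ω k (f u) (f v) (i + 1)) :=
  stmt_15_general k hk2 F hq ω hω
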